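/- For a prime p, n ≥ 1, and the formal group law F(x,y) = x + y - v*x*y over Z_(p)[v], write [p^n](x) = Σ_{k=0}^{p^n-1} a_k x^{k+1} with a_k = (-1)^k binom(p^n, k+1) v^k. Then a_k is divisible by p in Z_(p)[v] for all 0 ≤ k < p^n - 1, and a_{p^n - 1} is a unit multiple of v^{p^n - 1}. -/

import Mathlib

/-- The formal group law `F(x,y) = x + y - v*x*y` on power series over `R[v]`. -/
noncomputable def F (R : Type*) [CommRing R]
    (a b : PowerSeries (Polynomial R)) : PowerSeries (Polynomial R) :=
  a + b - PowerSeries.C (Polynomial.X : Polynomial R) * a * b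

/-- The `m`-series of `F`: `[0](x) = 0`, `[m+1](x) = F([m](x), x)`. -/
noncomputable def mser (R : Type*) [CommRing R] : ℕ → PowerSeries (Polynomial R)
  | 0 => 0
  | m + 1 => F R (mser R m) PowerSeries.X

/-- Key identity: `1 - v * [m](x) = (1 - v*x)^m`. -/
lemma one_sub_mser (R : Type*) [CommRing R] (m : ℕ) :
    1 - PowerSeries.C (Polynomial.X : Polynomial R) * mser R m
      = (1 - PowerSeries.C (Polynomial.X : Polynomial R) * PowerSeries.X) ^ m := by
  induction m with
  | zero => simp [mser]
  | succ m ih =>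
      rw [pow_succ, ← ih]
      simp only [mser, F]
      ring

/-- Closed formula for the `m`-series. -/
lemma mser_eq (R : Type*) [CommRing R] [IsDomain R] (m : ℕ) :
    mser R m = ∑ k ∈ Finset.range m,
      PowerSeries.C
        ((-1) ^ k * (m.choose (k + 1) : Polynomial R) * Polynomial.X ^ k)
        * PowerSeries.X ^ (k + 1) := by
  set v : PowerSeries (Polynomial R) := PowerSeries.C (Polynomial.X : Polynomial R) with hv
  have hvne : v ≠ 0 := by
    rw [hv]
    exact_mod_cast (map_ne_zero_iff _ (PowerSeries.C_injective)).mpr Polynomial.X_ne_zero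
  apply mul_left_cancel₀ hvne
  have h2 : v * mser R m = 1 - (1 - v * PowerSeries.X) ^ m := by
    have := one_sub_mser R m
    rw [← hv] at this
    linear_combination -this
  rw [h2]
  have expand : (1 - v * PowerSeries.X) ^ m
      = ∑ k ∈ Finset.range (m + 1),
          (-(v * PowerSeries.X)) ^ k * (m.choose k : PowerSeries (Polynomial R)) := by
    rw [sub_eq_add_neg, add_comm, add_pow]
    simp
  rw [expand, Finset.sum_range_succ', Finset.mul_sum]
  simp only [pow_zero, Nat.choose_zero_right, Nat.cast_one, one_mul]
  rw [sub_add_eq_sub_sub_swap, sub_self, zero_sub, ← Finset.sum_neg_distrib]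
  refine Finset.sum_congr rfl fun k _ => ?_
  simp only [map_mul, map_pow, map_neg, map_one, map_natCast, hv]
  ring

theorem coeffs_of_pn_series (p n : ℕ) (hp : p.Prime) (hn : 1 ≤ n) :
    haveI hP : (Ideal.span {(p : ℤ)}).IsPrime :=
      (Ideal.span_singleton_prime (by exact_mod_cast hp.ne_zero)).mpr
        (Nat.prime_iff_prime_int.mp hp)
    let Zp := Localization.AtPrime (Ideal.span {(p : ℤ)})
    -- the coefficients `a_k = (-1)^k C(pⁿ, k+1) v^k ∈ ℤ_(p)[v]`
    let a : ℕ → Polynomial Zp := fun k =>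
      (-1) ^ k * ((p ^ n).choose (k + 1) : Polynomial Zp) * Polynomial.X ^ k
    -- `[pⁿ](x) = ∑_{k=0}^{pⁿ-1} a_k x^{k+1}`
    (mser Zp (p ^ n) = ∑ k ∈ Finset.range (p ^ n),
        PowerSeries.C (a k) * PowerSeries.X ^ (k + 1)) ∧
    -- `p ∣ a_k` for `0 ≤ k < pⁿ - 1`
    (∀ k, k < p ^ n - 1 → (p : Polynomial Zp) ∣ a k) ∧
    -- `a_{pⁿ-1}` is a unit multiple of `v^{pⁿ-1}`
    (∃ u : Zpˣ, a (p ^ n - 1) = Polynomial.C (u : Zp) * (Polynomial.X : Polynomial Zp) ^ (p ^ n - 1)) := by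
  haveI hP : (Ideal.span {(p : ℤ)}).IsPrime :=
    (Ideal.span_singleton_prime (by exact_mod_cast hp.ne_zero)).mpr
      (Nat.prime_iff_prime_int.mp hp)
  intro Zp a
  have hpn1 : 1 ≤ p ^ n := Nat.one_le_pow _ _ hp.pos
  refine ⟨mser_eq Zp (p ^ n), fun k hk => ?_, ?_⟩
  · have h1 : (p : ℕ) ∣ (p ^ n).choose (k + 1) :=
      hp.dvd_choose_pow (Nat.succ_ne_zero k) (by omega)
    have h2 : (p : Polynomial Zp) ∣ ((p ^ n).choose (k + 1) : Polynomial Zp) := by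
      exact_mod_cast Nat.cast_dvd_cast (α := Polynomial Zp) h1
    exact Dvd.dvd.mul_right (Dvd.dvd.mul_left h2 _) _
  · refine ⟨(-1) ^ (p ^ n - 1), ?_⟩
    show (-1) ^ (p ^ n - 1) * ((p ^ n).choose (p ^ n - 1 + 1) : Polynomial Zp)
        * Polynomial.X ^ (p ^ n - 1) = _
    rw [Nat.sub_add_cancel hpn1, Nat.choose_self]
    simp
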